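/- arXiv:1906.03439 — 2 statements merged into one kernel-verified Lean document; each statement's English description precedes it below -/
import Mathlib

section
/- Let A be a real symmetric m×m matrix with λ_min(A) ≥ -K/2 for K ≥ 0, and let h > 0 with h²K ≤ 2. Then ‖(I + (h²/2)A)^{-1}(I - (h²/2)A)‖ ≤ 1 + h²K, where ‖·‖ is the operator norm induced by the Euclidean norm. -/
/-!
The matrix `(1 + c • A)⁻¹ * (1 - c • A)` is the image of `A` under the functional calculus of
`x ↦ (1 - c x) / (1 + c x)`, so its L² operator norm is the largest value of `|(1 - c λ) / (1 + c λ)|`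
over the eigenvalues `λ` of `A`. For `λ ≥ 0` this ratio is at most `1`; for `-K/2 ≤ λ < 0`, writing
`t = -c λ ≤ c K / 2 ≤ 1/2`, it is `(1 + t) / (1 - t) ≤ 1 + 4 t ≤ 1 + 2 c K`.
-/

open Matrix

theorem one_add_mul_pos_of_neg_half_le {c K x : ℝ} (hc : 0 ≤ c) (hcK : c * K ≤ 1)
    (hx : -(K / 2) ≤ x) : 0 < 1 + c * x := by
  nlinarith [mul_le_mul_of_nonneg_left hx hc]

theorem abs_one_sub_mul_div_one_add_mul_le {c K x : ℝ} (hc : 0 ≤ c) (hK : 0 ≤ K)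
    (hcK : c * K ≤ 1) (hx : -(K / 2) ≤ x) :
    |(1 - c * x) / (1 + c * x)| ≤ 1 + 2 * c * K := by
  have hpos := one_add_mul_pos_of_neg_half_le hc hcK hx
  have hcx : -(c * K / 2) ≤ c * x := by nlinarith [mul_le_mul_of_nonneg_left hx hc]
  have hcK₀ : 0 ≤ c * K := mul_nonneg hc hK
  rw [abs_div, abs_of_pos hpos, div_le_iff₀ hpos, abs_le]
  constructor <;> nlinarith [mul_nonneg hcK₀ (sub_nonneg.2 hcK)]

namespace Matrix.IsHermitian

variable {n 𝕜 : Type*} [Fintype n] [DecidableEq n] [RCLike 𝕜] {A : Matrix n n 𝕜}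

open scoped Matrix.Norms.L2Operator in
theorem norm_toEuclideanCLM_cfc_le (hA : A.IsHermitian) {f : ℝ → ℝ} {C : ℝ}
    (hf : ∀ i, |f (hA.eigenvalues i)| ≤ C) (hC : 0 ≤ C) :
    ‖toEuclideanCLM (𝕜 := 𝕜) (n := n) (cfc f A)‖ ≤ C := by
  rw [← cstar_norm_def, hA.cfc_eq, IsHermitian.cfc, Unitary.conjStarAlgAut_apply,
    ← Unitary.coe_star, CStarRing.norm_mul_coe_unitary, CStarRing.norm_coe_unitary_mul,
    l2_opNorm_diagonal]
  refine (pi_norm_le_iff_of_nonneg hC).2 fun i => ?_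
  simpa using hf i

theorem inv_one_add_smul_mul_one_sub_smul (hA : A.IsHermitian) {c : ℝ}
    (hc : ∀ i, 1 + c * hA.eigenvalues i ≠ 0) :
    (1 + c • A)⁻¹ * (1 - c • A) = cfc (fun x => (1 - c * x) / (1 + c * x)) A := by
  have hcont (g : ℝ → ℝ) : ContinuousOn g (spectrum ℝ A) := A.finite_real_spectrum.continuousOn g
  have hne : ∀ x ∈ spectrum ℝ A, 1 + c * x ≠ 0 := by
    rw [hA.spectrum_real_eq_range_eigenvalues]
    rintro _ ⟨i, rfl⟩
    exact hc i
  have hadd : cfc (fun x => 1 + c * x) A = 1 + c • A := by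
    rw [cfc_add A _ _ (hcont _) (hcont _), cfc_const_one ℝ A, cfc_const_mul c _ A (hcont _),
      cfc_id' ℝ A]
  have hsub : cfc (fun x => 1 - c * x) A = 1 - c • A := by
    rw [cfc_sub _ _ A (hcont _) (hcont _), cfc_const_one ℝ A, cfc_const_mul c _ A (hcont _),
      cfc_id' ℝ A]
  have hinv : (1 + c • A)⁻¹ = cfc (fun x => (1 + c * x)⁻¹) A := by
    refine inv_eq_left_inv ?_
    rw [← hadd, ← cfc_mul _ _ A (hcont _) (hcont _), ← cfc_one ℝ A]
    exact cfc_congr fun x hx => inv_mul_cancel₀ (hne x hx)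
  rw [hinv, ← hsub, ← cfc_mul _ _ A (hcont _) (hcont _)]
  exact cfc_congr fun x _ => inv_mul_eq_div _ _

end Matrix.IsHermitian

theorem stmt_1_general {m : ℕ} (A : Matrix (Fin m) (Fin m) ℝ) (hA : A.IsHermitian)
    (K h : ℝ) (hK : 0 ≤ K)
    (hEig : ∀ i, -(K / 2) ≤ hA.eigenvalues i)
    (hhK : h ^ 2 * K ≤ 2) :
    ‖Matrix.toEuclideanCLM (𝕜 := ℝ) (n := Fin m)
        ((1 + (h ^ 2 / 2) • A)⁻¹ * (1 - (h ^ 2 / 2) • A))‖ ≤ 1 + h ^ 2 * K := by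
  have hc : 0 ≤ h ^ 2 / 2 := by positivity
  have hcK : h ^ 2 / 2 * K ≤ 1 := by linarith
  rw [hA.inv_one_add_smul_mul_one_sub_smul fun i =>
    (one_add_mul_pos_of_neg_half_le hc hcK (hEig i)).ne']
  refine hA.norm_toEuclideanCLM_cfc_le (fun i => ?_) (by nlinarith [sq_nonneg h])
  calc _ ≤ 1 + 2 * (h ^ 2 / 2) * K := abs_one_sub_mul_div_one_add_mul_le hc hK hcK (hEig i)
    _ = 1 + h ^ 2 * K := by ring

theorem stmt_1 {m : ℕ} (A : Matrix (Fin m) (Fin m) ℝ) (hA : A.IsHermitian)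
    (K h : ℝ) (hK : 0 ≤ K) (hh : 0 < h)
    (hEig : ∀ i, -(K / 2) ≤ hA.eigenvalues i)
    (hhK : h ^ 2 * K ≤ 2) :
    ‖Matrix.toEuclideanCLM (𝕜 := ℝ) (n := Fin m)
        ((1 + (h ^ 2 / 2) • A)⁻¹ * (1 - (h ^ 2 / 2) • A))‖ ≤ 1 + h ^ 2 * K :=
  stmt_1_general A hA K h hK hEig hhK
end

section
/- Let B be a real symmetric positive definite m×m matrix. Then its smallest eigenvalue satisfies λ_min(B) ≥ det(B) · ((m-1)/‖B‖_F²)^{(m-1)/2} for m ≥ 2, where ‖B‖_F denotes the Frobenius norm. -/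
/-!
Writing `λ` for the eigenvalues of `B`, we have `det B = ∏ λⱼ` and `∑ Bᵢⱼ² = ∑ λⱼ²`. Hence
`det B = λᵢ · ∏_{j ≠ i} λⱼ`, and the AM–QM inequality for the `m - 1` eigenvalues other than `λᵢ`
bounds that product by `(∑ λⱼ² / (m - 1)) ^ ((m - 1) / 2)`.
-/

open Matrix Finset

theorem Real.prod_le_sum_div_card_pow {ι : Type*} (s : Finset ι) (z : ι → ℝ)
    (hz : ∀ i ∈ s, 0 ≤ z i) : ∏ i ∈ s, z i ≤ ((∑ i ∈ s, z i) / #s) ^ #s := by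
  rcases s.eq_empty_or_nonempty with rfl | hs
  · simp
  have hcard : (0 : ℝ) < #s := by exact_mod_cast hs.card_pos
  have amgm := Real.geom_mean_le_arith_mean_weighted s (fun _ ↦ (#s : ℝ)⁻¹) z
    (fun _ _ ↦ by positivity) (by simp [hcard.ne']) hz
  rwa [Real.finsetProd_rpow s z hz, ← mul_sum, inv_mul_eq_div, Real.rpow_inv_le_iff_of_pos
    (prod_nonneg hz) (div_nonneg (sum_nonneg hz) hcard.le) hcard, Real.rpow_natCast] at amgm

theorem Real.prod_le_sum_sq_div_card_rpow {ι : Type*} (s : Finset ι) (f : ι → ℝ)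
    (hf : ∀ i ∈ s, 0 ≤ f i) :
    ∏ i ∈ s, f i ≤ ((∑ i ∈ s, f i ^ 2) / #s) ^ ((#s : ℝ) / 2) := by
  have hmean : 0 ≤ (∑ i ∈ s, f i ^ 2) / #s := by positivity
  rw [← pow_le_pow_iff_left₀ (prod_nonneg hf) (by positivity) two_ne_zero,
    ← Real.rpow_mul_natCast hmean, Nat.cast_two, div_mul_cancel₀ _ two_ne_zero,
    Real.rpow_natCast, ← prod_pow]
  exact Real.prod_le_sum_div_card_pow s _ fun i _ ↦ sq_nonneg (f i)

theorem Matrix.IsHermitian.sum_norm_sq_eq_sum_eigenvalues_sq {n 𝕜 : Type*} [Fintype n]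
    [DecidableEq n] [RCLike 𝕜] {A : Matrix n n 𝕜} (hA : A.IsHermitian) :
    ∑ i, ∑ j, ‖A i j‖ ^ 2 = ∑ i, hA.eigenvalues i ^ 2 := by
  have htrace : (A * A).trace = ∑ i, (hA.eigenvalues i : 𝕜) ^ 2 := by
    conv_lhs => rw [hA.spectral_theorem, ← map_mul, Unitary.conjStarAlgAut_apply, trace_mul_cycle,
      Unitary.coe_star_mul_self, one_mul, diagonal_mul_diagonal, trace_diagonal]
    simp [sq]
  have hentries : (A * A).trace = ∑ i, ∑ j, ((‖A i j‖ ^ 2 : ℝ) : 𝕜) := by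
    simp only [trace, diag_apply, mul_apply]
    refine sum_congr rfl fun i _ ↦ sum_congr rfl fun j _ ↦ ?_
    rw [← hA.apply j i, RCLike.star_def, RCLike.mul_conj, RCLike.ofReal_pow]
  exact_mod_cast hentries.symm.trans htrace

theorem Real.prod_mul_card_pred_div_sum_sq_rpow_le {ι : Type*} [Fintype ι] (x : ι → ℝ)
    (hx : ∀ j, 0 < x j) (i : ι) :
    (∏ j, x j) * (((Fintype.card ι : ℝ) - 1) / ∑ j, x j ^ 2) ^ (((Fintype.card ι : ℝ) - 1) / 2)
      ≤ x i := by
  classical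
  have hn : (#(univ.erase i) : ℝ) = Fintype.card ι - 1 := by
    rw [card_erase_of_mem (mem_univ i), card_univ, Nat.cast_pred (Fintype.card_pos_iff.mpr ⟨i⟩)]
  set S := ∑ j, x j ^ 2
  set n := #(univ.erase i)
  have hrest : ∏ j ∈ univ.erase i, x j ≤ (S / n) ^ ((n : ℝ) / 2) := by
    refine (Real.prod_le_sum_sq_div_card_rpow _ x fun j _ ↦ (hx j).le).trans ?_
    gcongr
    exact sum_le_sum_of_subset_of_nonneg (erase_subset i univ) fun j _ _ ↦ sq_nonneg _
  -- `(S / n) * (n / S)` is `1`, or `0` when `n = 0`; in the latter case `0 ^ 0 = 1`.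
  have hcancel : (S / n) ^ ((n : ℝ) / 2) * (n / S) ^ ((n : ℝ) / 2) ≤ 1 := by
    rw [← Real.mul_rpow (by positivity) (by positivity), div_mul_div_comm, mul_comm (n : ℝ)]
    exact Real.rpow_le_one (by positivity) (div_self_le_one _) (by positivity)
  rw [← mul_prod_erase univ x (mem_univ i), ← hn, mul_assoc]
  refine mul_le_of_le_one_right (hx i).le ?_
  calc (∏ j ∈ univ.erase i, x j) * (n / S) ^ ((n : ℝ) / 2)
      ≤ (S / n) ^ ((n : ℝ) / 2) * (n / S) ^ ((n : ℝ) / 2) := by gcongr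
    _ ≤ 1 := hcancel

theorem stmt_6 {m : ℕ} (hm : 2 ≤ m) (B : Matrix (Fin m) (Fin m) ℝ) (hB : B.PosDef) :
    B.det * (((m : ℝ) - 1) / (∑ i, ∑ j, B i j ^ 2)) ^ (((m : ℝ) - 1) / 2) ≤
      ⨅ i, hB.1.eigenvalues i := by
  have : Nonempty (Fin m) := ⟨⟨0, by omega⟩⟩
  have hsq : ∑ i, ∑ j, B i j ^ 2 = ∑ i, hB.1.eigenvalues i ^ 2 := by
    simpa using hB.1.sum_norm_sq_eq_sum_eigenvalues_sq
  have hdet : B.det = ∏ i, hB.1.eigenvalues i := by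
    simpa using hB.1.det_eq_prod_eigenvalues
  rw [hsq, hdet]
  refine le_ciInf fun i ↦ ?_
  simpa using Real.prod_mul_card_pred_div_sum_sq_rpow_le _ hB.eigenvalues_pos i
end
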